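/- In the interactive communication setting where ω is common randomness independent of i.i.d. sources (X_1^n, X_2^n), and C_i satisfies C_i — ω C_{[1:i-1]} X_2^n — X_1^n for even i, the following chain of (in)equalities holds: ∑_{i odd} H(C_i) ≥ I(ω C_{[1:r]}; X_1^n | X_2^n) = ∑_{q=1}^n I(ω C_{[1:r]} X_1^{q+1:n} X_{2,∼q}; X_{1,q} | X_{2,q}) ≥ n·I(F_{[1:r]}; X_1 | X_2), where Q is uniform on [1:n] independent of everything, F_i := (ω, C_i, X_1^{Q+1:n}, X_2^{1:Q-1}, Q), X_1 := X_{1,Q}, X_2 := X_{2,Q}. -/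

import Mathlib

set_option synthInstance.maxSize 2000
set_option synthInstance.maxHeartbeats 1000000

open Finset

/-- Total variation distance between two pmfs on a finite set: half the ℓ¹ distance. -/
noncomputable def TV {α : Type*} [Fintype α] (p q : α → ℝ) : ℝ :=
  (∑ a, |p a - q a|) / 2

/-- Shannon entropy of a pmf. -/
noncomputable def ent {α : Type*} [Fintype α] (p : α → ℝ) : ℝ :=
  -∑ a, p a * Real.log (p a)

/-- Binary entropy function. -/
noncomputable def hb (t : ℝ) : ℝ := -t * Real.log t - (1 - t) * Real.log (1 - t)

/-- `p` is a probability mass function. -/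
def IsPMF {α : Type*} [Fintype α] (p : α → ℝ) : Prop :=
  (∀ a, 0 ≤ p a) ∧ ∑ a, p a = 1

/-- Pushforward pmf (distribution of the random variable `X` under `μ`). -/
noncomputable def pushf {Ω α : Type*} [Fintype Ω] [DecidableEq α]
    (μ : Ω → ℝ) (X : Ω → α) : α → ℝ :=
  fun a => ∑ ω ∈ Finset.univ.filter (fun ω => X ω = a), μ ω

/-- Entropy of a random variable `X` on a finite probability space with pmf `μ`. -/
noncomputable def Hent {Ω α : Type*} [Fintype Ω] [Fintype α] [DecidableEq α]
    (μ : Ω → ℝ) (X : Ω → α) : ℝ := ent (pushf μ X)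

/-- Conditional mutual information `I(A ; C | B)` of random variables on a finite
probability space with pmf `μ`, defined via entropies:
`I(A;C|B) = H(A,B) + H(B,C) - H(A,B,C) - H(B)`. -/
noncomputable def condMI {Ω α β γ : Type*} [Fintype Ω] [Fintype α] [Fintype β] [Fintype γ]
    [DecidableEq α] [DecidableEq β] [DecidableEq γ]
    (μ : Ω → ℝ) (A : Ω → α) (B : Ω → β) (C : Ω → γ) : ℝ :=
  Hent μ (fun ω => (A ω, B ω)) + Hent μ (fun ω => (B ω, C ω))
    - Hent μ (fun ω => (A ω, B ω, C ω)) - Hent μ B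

/-!
Every information quantity here is a finite sum over `Ω`, `H(X) = -∑ ω, μ ω * log P(X = X ω)`,
so entropies only see the level sets of a random variable, and the Shannon inequalities follow
pointwise from `1 - x⁻¹ ≤ log x`.

First inequality: by the chain rule over the rounds, `I(G C; X₁ⁿ | X₂ⁿ)` is `I(G; X₁ⁿ | X₂ⁿ) = 0`
plus one term per round, at most `H(C_i)` for even `i` and zero by the Markov condition for odd `i`.
Identity: the chain rule over the coordinates of `X₁ⁿ`, from the last one, gives the terms
`I(G C; X_{1,q} | X₂ⁿ X_{1,q+1:n})`; moving `X_{1,q+1:n} X_{2,∼q}` from the condition into the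
first argument is free because that tuple is independent of `(X_{1,q}, X_{2,q})`.
Last inequality: `F` determines `Q` and the law of `(X_{1,Q}, X_{2,Q})` does not depend on `Q`, so
`n · I(F; X₁ | X₂)` is the sum over `q` of the terms with `F` in place of
`G C X_{1,q+1:n} X_{2,∼q}`, of which `F` is a function.
-/

lemma mul_one_sub_le_mul_log {m t b ab bc : ℝ} (hm : 0 ≤ m) (ht : m ≤ t) (hb : m ≤ b)
    (hab : m ≤ ab) (hbc : m ≤ bc) :
    m * (1 - ab * bc / (t * b)) ≤ m * (Real.log t + Real.log b - Real.log ab - Real.log bc) := by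
  rcases hm.eq_or_lt with rfl | hpos
  · simp
  have ht := hpos.trans_le ht
  have hb := hpos.trans_le hb
  have hab := hpos.trans_le hab
  have hbc := hpos.trans_le hbc
  refine mul_le_mul_of_nonneg_left ?_ hpos.le
  have h := Real.one_sub_inv_le_log_of_pos (x := t * b / (ab * bc)) (by positivity)
  rwa [inv_div, Real.log_div (by positivity) (by positivity), Real.log_mul ht.ne' hb.ne',
    Real.log_mul hab.ne' hbc.ne', ← sub_sub] at h

section Pushforward

variable {Ω α β : Type*} [Fintype Ω] (μ : Ω → ℝ)

lemma sum_pushf_mul [Fintype α] [DecidableEq α] (X : Ω → α) (F : α → ℝ) :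
    ∑ a, pushf μ X a * F a = ∑ ω, μ ω * F (X ω) := by
  rw [← Finset.sum_fiberwise Finset.univ X]
  refine Finset.sum_congr rfl fun a _ => ?_
  rw [pushf, Finset.sum_mul]
  exact Finset.sum_congr rfl fun ω hω => by rw [(Finset.mem_filter.mp hω).2]

lemma sum_pushf [Fintype α] [DecidableEq α] (X : Ω → α) : ∑ a, pushf μ X a = ∑ ω, μ ω := by
  simpa using sum_pushf_mul μ X 1

lemma pushf_comp [Fintype α] [DecidableEq α] [DecidableEq β] (X : Ω → α) (f : α → β) :
    pushf μ (fun ω => f (X ω)) = pushf (pushf μ X) f := by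
  funext b
  have h := sum_pushf_mul μ X fun a => if f a = b then 1 else 0
  simp only [mul_ite, mul_one, mul_zero, ← Finset.sum_filter] at h
  exact h.symm

lemma pushf_nonneg [DecidableEq α] {μ : Ω → ℝ} (hμ : ∀ ω, 0 ≤ μ ω) (X : Ω → α) (a : α) :
    0 ≤ pushf μ X a :=
  Finset.sum_nonneg fun ω _ => hμ ω

lemma le_pushf_self [DecidableEq α] {μ : Ω → ℝ} (hμ : ∀ ω, 0 ≤ μ ω) (X : Ω → α) (ω : Ω) :
    μ ω ≤ pushf μ X (X ω) :=
  Finset.single_le_sum (fun ω _ => hμ ω) (Finset.mem_filter.mpr ⟨Finset.mem_univ ω, rfl⟩)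

lemma sum_pushf_pair_right [DecidableEq α] [Fintype β] [DecidableEq β]
    (X : Ω → α) (Y : Ω → β) (a : α) :
    ∑ b, pushf μ (fun ω => (X ω, Y ω)) (a, b) = pushf μ X a := by
  simp only [pushf, ← Finset.sum_fiberwise (Finset.univ.filter fun ω => X ω = a) Y μ,
    Finset.filter_filter, Prod.mk.injEq]

lemma sum_pushf_pair_left [Fintype α] [DecidableEq α] [DecidableEq β]
    (X : Ω → α) (Y : Ω → β) (b : β) :
    ∑ a, pushf μ (fun ω => (X ω, Y ω)) (a, b) = pushf μ Y b := by
  simp only [pushf, ← Finset.sum_fiberwise (Finset.univ.filter fun ω => Y ω = b) X μ,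
    Finset.filter_filter, Prod.mk.injEq, and_comm]

end Pushforward

section Products

variable {α β γ δ : Type*} [Fintype α]

lemma pushf_equiv [DecidableEq β] (ν : α → ℝ) (e : α ≃ β) (b : β) :
    pushf ν e b = ν (e.symm b) := by
  rw [pushf, Finset.sum_eq_single_of_mem (e.symm b) (by simp)]
  intro a ha hne
  exact absurd (e.symm_apply_eq.mpr (Finset.mem_filter.mp ha).2.symm).symm hne

lemma pushf_prodMap [Fintype β] [DecidableEq γ] [DecidableEq δ] (u : α → ℝ) (v : β → ℝ)
    (f : α → γ) (g : β → δ) :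
    pushf (fun z : α × β => u z.1 * v z.2) (Prod.map f g)
      = fun w => pushf u f w.1 * pushf v g w.2 := by
  funext w
  have hfilter : Finset.univ.filter (fun z : α × β => Prod.map f g z = w)
      = Finset.univ.filter (fun a => f a = w.1) ×ˢ Finset.univ.filter (fun b => g b = w.2) := by
    ext z
    simp [Prod.ext_iff]
  rw [pushf, hfilter, Finset.sum_product, pushf, pushf, Finset.sum_mul_sum]

end Products

def SameFibers {Ω α β : Type*} (X : Ω → α) (Y : Ω → β) : Prop :=
  ∀ ω ω', X ω = X ω' ↔ Y ω = Y ω'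

lemma SameFibers.pair {Ω α β γ δ : Type*} {X : Ω → α} {Y : Ω → β} {X' : Ω → γ} {Y' : Ω → δ}
    (hX : SameFibers X X') (hY : SameFibers Y Y') :
    SameFibers (fun ω => (X ω, Y ω)) (fun ω => (X' ω, Y' ω)) := fun ω ω' => by
  simp only [Prod.mk.injEq, hX ω ω', hY ω ω']

section Entropy

variable {Ω α β γ δ : Type*} [Fintype Ω]
  [Fintype α] [DecidableEq α] [Fintype β] [DecidableEq β]
  [Fintype γ] [DecidableEq γ] [Fintype δ] [DecidableEq δ] {μ : Ω → ℝ}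

lemma Hent_eq_neg_sum (μ : Ω → ℝ) (X : Ω → α) :
    Hent μ X = -∑ ω, μ ω * Real.log (pushf μ X (X ω)) := by
  rw [Hent, ent, sum_pushf_mul μ X fun a => Real.log (pushf μ X a)]

lemma Hent_congr {X : Ω → α} {Y : Ω → β} (h : SameFibers X Y) : Hent μ X = Hent μ Y := by
  have hfib : ∀ ω, pushf μ X (X ω) = pushf μ Y (Y ω) := fun ω =>
    Finset.sum_congr (Finset.filter_congr fun ω' _ => h ω' ω) fun _ _ => rfl
  simp only [Hent_eq_neg_sum, hfib]

lemma Hent_le_Hent_pair (hμ : ∀ ω, 0 ≤ μ ω) (X : Ω → α) (Y : Ω → β) :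
    Hent μ X ≤ Hent μ (fun ω => (X ω, Y ω)) := by
  rw [Hent_eq_neg_sum, Hent_eq_neg_sum, neg_le_neg_iff]
  refine Finset.sum_le_sum fun ω _ => ?_
  rcases (hμ ω).eq_or_lt with h0 | hpos
  · simp [← h0]
  refine mul_le_mul_of_nonneg_left (Real.log_le_log ?_ ?_) hpos.le
  · exact hpos.trans_le (le_pushf_self hμ _ ω)
  · refine Finset.sum_le_sum_of_subset_of_nonneg (fun ω' => ?_) fun ω' _ _ => hμ ω'
    simp only [Finset.mem_filter, Finset.mem_univ, true_and, Prod.mk.injEq]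
    exact And.left

lemma Hent_const (hμ : ∑ ω, μ ω = 1) (c : α) : Hent μ (fun _ => c) = 0 := by
  simp [Hent_eq_neg_sum, pushf, hμ]

lemma condMI_congr {α' β' γ' : Type*} [Fintype α'] [DecidableEq α'] [Fintype β']
    [DecidableEq β'] [Fintype γ'] [DecidableEq γ'] {A : Ω → α} {B : Ω → β} {C : Ω → γ}
    {A' : Ω → α'} {B' : Ω → β'} {C' : Ω → γ'}
    (hA : SameFibers A A') (hB : SameFibers B B') (hC : SameFibers C C') :
    condMI μ A B C = condMI μ A' B' C' := by
  rw [condMI, condMI, Hent_congr (hA.pair hB), Hent_congr (hB.pair hC),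
    Hent_congr (hA.pair (hB.pair hC)), Hent_congr hB]

lemma condMI_comm (A : Ω → α) (B : Ω → β) (C : Ω → γ) :
    condMI μ A B C = condMI μ C B A := by
  have hAB : Hent μ (fun ω => (A ω, B ω)) = Hent μ (fun ω => (B ω, A ω)) :=
    Hent_congr fun ω ω' => by simp only [Prod.mk.injEq, and_comm]
  have hBC : Hent μ (fun ω => (B ω, C ω)) = Hent μ (fun ω => (C ω, B ω)) :=
    Hent_congr fun ω ω' => by simp only [Prod.mk.injEq, and_comm]
  have hABC : Hent μ (fun ω => (A ω, B ω, C ω)) = Hent μ (fun ω => (C ω, B ω, A ω)) :=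
    Hent_congr fun ω ω' => by simp only [Prod.mk.injEq]; tauto
  rw [condMI, condMI, hAB, hBC, hABC]
  ring

lemma condMI_pair_left (A : Ω → α) (A' : Ω → δ) (B : Ω → β) (C : Ω → γ) :
    condMI μ (fun ω => (A ω, A' ω)) B C
      = condMI μ A B C + condMI μ A' (fun ω => (B ω, A ω)) C := by
  have h1 : Hent μ (fun ω => ((A ω, A' ω), B ω)) = Hent μ (fun ω => (A' ω, B ω, A ω)) :=
    Hent_congr fun ω ω' => by simp only [Prod.mk.injEq]; tauto
  have h2 : Hent μ (fun ω => ((A ω, A' ω), B ω, C ω))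
      = Hent μ (fun ω => (A' ω, (B ω, A ω), C ω)) :=
    Hent_congr fun ω ω' => by simp only [Prod.mk.injEq]; tauto
  have h3 : Hent μ (fun ω => (A ω, B ω, C ω)) = Hent μ (fun ω => ((B ω, A ω), C ω)) :=
    Hent_congr fun ω ω' => by simp only [Prod.mk.injEq]; tauto
  have h4 : Hent μ (fun ω => (A ω, B ω)) = Hent μ (fun ω => (B ω, A ω)) :=
    Hent_congr fun ω ω' => by simp only [Prod.mk.injEq, and_comm]
  rw [condMI, condMI, condMI, h1, h2, h3, h4]
  ring

lemma condMI_pair_right (A : Ω → α) (B : Ω → β) (C : Ω → γ) (C' : Ω → δ) :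
    condMI μ A B (fun ω => (C ω, C' ω))
      = condMI μ A B C + condMI μ A (fun ω => (B ω, C ω)) C' := by
  rw [condMI_comm, condMI_pair_left, condMI_comm C, condMI_comm C']

lemma condMI_pair_left_eq_of_condMI_eq_zero (A : Ω → α) (W : Ω → δ) (B : Ω → β) (Z : Ω → γ)
    (hW : condMI μ W B Z = 0) :
    condMI μ (fun ω => (A ω, W ω)) B Z = condMI μ A (fun ω => (B ω, W ω)) Z := by
  rw [condMI_congr (A' := fun ω => (W ω, A ω)) (fun ω ω' => by simp only [Prod.mk.injEq, and_comm])
    (fun _ _ => .rfl) (fun _ _ => .rfl), condMI_pair_left, hW, zero_add]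

lemma condMI_eq_zero_of_subsingleton [Subsingleton γ] (A : Ω → α) (B : Ω → β) (C : Ω → γ) :
    condMI μ A B C = 0 := by
  rw [condMI, Hent_congr (X := fun ω => (B ω, C ω)) (Y := B)
      fun ω ω' => by simp [Subsingleton.elim (C ω) (C ω')],
    Hent_congr (X := fun ω => (A ω, B ω, C ω)) (Y := fun ω => (A ω, B ω))
      fun ω ω' => by simp [Subsingleton.elim (C ω) (C ω')]]
  ring

lemma condMI_eq_sum (μ : Ω → ℝ) (A : Ω → α) (B : Ω → β) (C : Ω → γ) :
    condMI μ A B C = ∑ ω, μ ω *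
      (Real.log (pushf μ (fun ω => (A ω, B ω, C ω)) (A ω, B ω, C ω)) + Real.log (pushf μ B (B ω))
        - Real.log (pushf μ (fun ω => (A ω, B ω)) (A ω, B ω))
        - Real.log (pushf μ (fun ω => (B ω, C ω)) (B ω, C ω))) := by
  simp only [condMI, Hent_eq_neg_sum, mul_add, mul_sub, Finset.sum_add_distrib,
    Finset.sum_sub_distrib]
  ring

lemma sum_pushf_mul_pushf_div (A : Ω → α) (B : Ω → β) (C : Ω → γ) :
    ∑ x : α × β × γ, pushf μ (fun ω => (A ω, B ω)) (x.1, x.2.1)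
      * pushf μ (fun ω => (B ω, C ω)) (x.2.1, x.2.2) / pushf μ B x.2.1 = ∑ ω, μ ω := by
  calc _ = ∑ b, ∑ a, ∑ c, pushf μ (fun ω => (A ω, B ω)) (a, b)
        * pushf μ (fun ω => (B ω, C ω)) (b, c) / pushf μ B b := by
        simp only [Fintype.sum_prod_type]; exact Finset.sum_comm
    _ = ∑ b, (∑ a, pushf μ (fun ω => (A ω, B ω)) (a, b))
        * (∑ c, pushf μ (fun ω => (B ω, C ω)) (b, c)) / pushf μ B b := by
        simp only [Finset.sum_mul_sum, Finset.sum_div]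
    _ = ∑ b, pushf μ B b := by
        -- `x * x / x = x` holds also at `x = 0`, where Lean's `0 / 0 = 0`
        simp only [sum_pushf_pair_left, sum_pushf_pair_right, mul_self_div_self]
    _ = ∑ ω, μ ω := sum_pushf μ B

lemma condMI_nonneg (hμ : IsPMF μ) (A : Ω → α) (B : Ω → β) (C : Ω → γ) :
    0 ≤ condMI μ A B C := by
  set t := pushf μ (fun ω => (A ω, B ω, C ω))
  set pab := pushf μ (fun ω => (A ω, B ω))
  set pbc := pushf μ (fun ω => (B ω, C ω))
  set pb := pushf μ B
  set F : α × β × γ → ℝ := fun x => pab (x.1, x.2.1) * pbc (x.2.1, x.2.2) / (t x * pb x.2.1)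
  have hpointwise : ∀ ω, μ ω * (1 - F (A ω, B ω, C ω)) ≤ μ ω * (Real.log (t (A ω, B ω, C ω))
      + Real.log (pb (B ω)) - Real.log (pab (A ω, B ω)) - Real.log (pbc (B ω, C ω))) :=
    fun ω => mul_one_sub_le_mul_log (hμ.1 ω) (le_pushf_self hμ.1 _ ω) (le_pushf_self hμ.1 B ω)
      (le_pushf_self hμ.1 _ ω) (le_pushf_self hμ.1 _ ω)
  have hF : ∑ ω, μ ω * F (A ω, B ω, C ω) ≤ 1 := by
    rw [← sum_pushf_mul μ (fun ω => (A ω, B ω, C ω)), ← hμ.2,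
      ← sum_pushf_mul_pushf_div A B C]
    refine Finset.sum_le_sum fun x _ => ?_
    have hy : 0 ≤ pab (x.1, x.2.1) * pbc (x.2.1, x.2.2) / pb x.2.1 :=
      div_nonneg (mul_nonneg (pushf_nonneg hμ.1 _ _) (pushf_nonneg hμ.1 _ _))
        (pushf_nonneg hμ.1 _ _)
    calc t x * F x = t x / t x * (pab (x.1, x.2.1) * pbc (x.2.1, x.2.2) / pb x.2.1) := by
          simp only [F]; ring
      _ ≤ _ := mul_le_of_le_one_left hy (div_self_le_one _)
  calc 0 ≤ ∑ ω, μ ω * (1 - F (A ω, B ω, C ω)) := by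
        simp only [mul_sub, mul_one, Finset.sum_sub_distrib, hμ.2]
        linarith
    _ ≤ condMI μ A B C := by
        rw [condMI_eq_sum]
        exact Finset.sum_le_sum fun ω _ => hpointwise ω

lemma Hent_pair_le_add (hμ : IsPMF μ) (X : Ω → α) (Y : Ω → β) :
    Hent μ (fun ω => (X ω, Y ω)) ≤ Hent μ X + Hent μ Y := by
  have h := condMI_nonneg hμ X (fun _ => ()) Y
  rw [condMI, Hent_const hμ.2, Hent_congr (X := fun ω => (X ω, ())) (Y := X) (by simp [SameFibers]),
    Hent_congr (X := fun ω => ((), Y ω)) (Y := Y) (by simp [SameFibers]),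
    Hent_congr (X := fun ω => (X ω, (), Y ω)) (Y := fun ω => (X ω, Y ω))
      (by simp [SameFibers])] at h
  linarith

lemma condMI_le_Hent (hμ : IsPMF μ) (A : Ω → α) (B : Ω → β) (C : Ω → γ) :
    condMI μ A B C ≤ Hent μ A := by
  have hmono : Hent μ (fun ω => (B ω, C ω)) ≤ Hent μ (fun ω => (A ω, B ω, C ω)) := by
    rw [Hent_congr (X := fun ω => (A ω, B ω, C ω)) (Y := fun ω => ((B ω, C ω), A ω))
      fun ω ω' => by simp only [Prod.mk.injEq]; tauto]
    exact Hent_le_Hent_pair hμ.1 _ A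
  have := Hent_pair_le_add hμ A B
  rw [condMI]
  linarith

lemma condMI_comp_le (hμ : IsPMF μ) (A : Ω → α) (B : Ω → β) (C : Ω → γ) (f : α → δ) :
    condMI μ (fun ω => f (A ω)) B C ≤ condMI μ A B C := by
  have hA : condMI μ A B C = condMI μ (fun ω => (f (A ω), A ω)) B C :=
    condMI_congr (fun ω ω' => by simp only [Prod.mk.injEq]; grind) (fun _ _ => .rfl)
      (fun _ _ => .rfl)
  rw [hA, condMI_pair_left]
  linarith [condMI_nonneg hμ A (fun ω => (B ω, f (A ω))) C]

end Entropy

section Independence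

variable {Ω α β γ δ ε : Type*} [Fintype Ω] [DecidableEq α] [DecidableEq β] {μ : Ω → ℝ}

def IndepRV (μ : Ω → ℝ) (U : Ω → α) (V : Ω → β) : Prop :=
  pushf μ (fun ω => (U ω, V ω)) = fun z => pushf μ U z.1 * pushf μ V z.2

lemma pushf_fst_of_pushf_pair_eq_mul [Fintype β] {u : α → ℝ} {v : β → ℝ} {U : Ω → α} {V : Ω → β}
    (hv : ∑ b, v b = 1) (h : pushf μ (fun ω => (U ω, V ω)) = fun z => u z.1 * v z.2) :
    pushf μ U = u := by
  funext a
  rw [← sum_pushf_pair_right μ U V, h]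
  simp [← Finset.mul_sum, hv]

lemma pushf_snd_of_pushf_pair_eq_mul [Fintype α] {u : α → ℝ} {v : β → ℝ} {U : Ω → α} {V : Ω → β}
    (hu : ∑ a, u a = 1) (h : pushf μ (fun ω => (U ω, V ω)) = fun z => u z.1 * v z.2) :
    pushf μ V = v := by
  funext b
  rw [← sum_pushf_pair_left μ U V, h]
  simp [← Finset.sum_mul, hu]

lemma indepRV_of_pushf_pair_eq_mul [Fintype α] [Fintype β] {u : α → ℝ} {v : β → ℝ}
    {U : Ω → α} {V : Ω → β} (hu : ∑ a, u a = 1) (hv : ∑ b, v b = 1)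
    (h : pushf μ (fun ω => (U ω, V ω)) = fun z => u z.1 * v z.2) : IndepRV μ U V := by
  rw [IndepRV, h, pushf_fst_of_pushf_pair_eq_mul hv h, pushf_snd_of_pushf_pair_eq_mul hu h]

variable [Fintype α] [Fintype β] [DecidableEq γ] [DecidableEq δ]

lemma IndepRV.comp {U : Ω → α} {V : Ω → β} (h : IndepRV μ U V) (f : α → γ) (g : β → δ) :
    IndepRV μ (fun ω => f (U ω)) (fun ω => g (V ω)) := by
  rw [IndepRV, pushf_comp μ U, pushf_comp μ V, ← pushf_prodMap, ← h]
  exact pushf_comp μ (fun ω => (U ω, V ω)) (Prod.map f g)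

lemma Hent_pair_of_indepRV (hμ : ∀ ω, 0 ≤ μ ω) {U : Ω → α} {V : Ω → β} (h : IndepRV μ U V) :
    Hent μ (fun ω => (U ω, V ω)) = Hent μ U + Hent μ V := by
  simp only [Hent_eq_neg_sum, ← neg_add, ← Finset.sum_add_distrib, ← mul_add, neg_inj]
  refine Finset.sum_congr rfl fun ω _ => ?_
  rcases (hμ ω).eq_or_lt with h0 | hpos
  · simp [← h0]
  rw [h, Real.log_mul (hpos.trans_le (le_pushf_self hμ U ω)).ne'
    (hpos.trans_le (le_pushf_self hμ V ω)).ne']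

lemma condMI_eq_zero_of_indepRV [Fintype γ] [Fintype δ] [Fintype ε] [DecidableEq ε]
    (hμ : ∀ ω, 0 ≤ μ ω) {U : Ω → α} {V : Ω → β} (h : IndepRV μ U V) (f : α → γ) (g : β → δ) (k : β → ε) :
    condMI μ (fun ω => f (U ω)) (fun ω => g (V ω)) (fun ω => k (V ω)) = 0 := by
  rw [condMI, Hent_pair_of_indepRV hμ (h.comp f g),
    Hent_pair_of_indepRV hμ (h.comp f fun b => (g b, k b))]
  ring

end Independence

section IID

lemma sum_prod_eq_one {ι 𝒳 : Type*} [Fintype ι] [DecidableEq ι] [Fintype 𝒳] {p : 𝒳 → ℝ}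
    (hp : ∑ x, p x = 1) : ∑ w : ι → 𝒳, ∏ j, p (w j) = 1 := by
  rw [← Fintype.piFinset_univ, Finset.sum_prod_piFinset, hp, Finset.prod_const_one]

variable {Ω ι 𝒳 : Type*} [Fintype Ω] [Fintype ι] [DecidableEq ι] [Fintype 𝒳] [DecidableEq 𝒳]
  {μ : Ω → ℝ} {p : 𝒳 → ℝ} {X : Ω → ι → 𝒳}

lemma pushf_coord_split (hX : pushf μ X = fun x => ∏ j, p (x j)) (q : ι) :
    pushf μ (fun ω => ((fun j : {j // j ≠ q} => X ω j), X ω q))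
      = fun z => (∏ j, p (z.1 j)) * p z.2 := by
  let e := (Equiv.funSplitAt q 𝒳).trans (Equiv.prodComm _ _)
  funext z
  rw [show (fun ω => ((fun j : {j // j ≠ q} => X ω j), X ω q)) = fun ω => e (X ω) from rfl,
    pushf_comp, hX, pushf_equiv, Fintype.prod_eq_mul_prod_subtype_ne _ q, mul_comm]
  simp only [e, Equiv.symm_trans_apply, Equiv.prodComm_symm, Equiv.prodComm_apply,
    Equiv.funSplitAt_symm_apply, dif_pos, Prod.swap]
  exact congrArg (· * p z.2) (Finset.prod_congr rfl fun j _ => by rw [dif_neg j.2])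

lemma indepRV_coord (hp : ∑ x, p x = 1) (hX : pushf μ X = fun x => ∏ j, p (x j)) (q : ι) :
    IndepRV μ (fun ω (j : {j // j ≠ q}) => X ω j) (fun ω => X ω q) :=
  indepRV_of_pushf_pair_eq_mul (sum_prod_eq_one hp) hp (pushf_coord_split hX q)

lemma pushf_coord (hp : ∑ x, p x = 1) (hX : pushf μ X = fun x => ∏ j, p (x j)) (q : ι) :
    pushf μ (fun ω => X ω q) = p :=
  pushf_snd_of_pushf_pair_eq_mul (sum_prod_eq_one hp) (pushf_coord_split hX q)

end IID

section ChainRules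

variable {Ω α β γ δ : Type*} [Fintype Ω]
  [Fintype α] [DecidableEq α] [Fintype β] [DecidableEq β]
  [Fintype γ] [DecidableEq γ] [Fintype δ] [DecidableEq δ] {μ : Ω → ℝ}

lemma condMI_pi_left (A : Ω → α) (B : Ω → β) (Z : Ω → δ) :
    ∀ {r : ℕ} (C : Fin r → Ω → γ), condMI μ (fun ω => (A ω, fun i => C i ω)) B Z
      = condMI μ A B Z + ∑ i : Fin r, condMI μ (C i)
          (fun ω => (A ω, (fun j : Fin i => C (Fin.castLE i.isLt.le j) ω), B ω)) Z
  | 0, C => by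
    rw [Finset.univ_eq_empty, Finset.sum_empty, add_zero]
    exact condMI_congr (fun ω ω' => by simp [Subsingleton.elim (fun i => C i ω) (fun i => C i ω')])
      (fun _ _ => .rfl) (fun _ _ => .rfl)
  | r + 1, C => by
    have hsplit : condMI μ (fun ω => (A ω, fun i => C i ω)) B Z
        = condMI μ (fun ω => ((A ω, fun i : Fin r => C i.castSucc ω), C (Fin.last r) ω)) B Z :=
      condMI_congr (fun ω ω' => by
        simp only [Prod.mk.injEq, funext_iff, Fin.forall_fin_succ']; tauto)
        (fun _ _ => .rfl) (fun _ _ => .rfl)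
    rw [hsplit, condMI_pair_left, condMI_pi_left A B Z (fun i : Fin r => C i.castSucc),
      Fin.sum_univ_castSucc, add_assoc]
    congr 2
    exact condMI_congr (fun _ _ => .rfl)
      (fun ω ω' => by simp only [Prod.mk.injEq]; tauto) (fun _ _ => .rfl)

lemma condMI_pi_le_sum_Hent (hμ : IsPMF μ) (A : Ω → α) (B : Ω → β) (Z : Ω → δ) {r : ℕ}
    (C : Fin r → Ω → γ) (S : Finset (Fin r)) (hA : condMI μ A B Z = 0)
    (hC : ∀ i ∉ S, condMI μ (C i)
      (fun ω => (A ω, (fun j : Fin i => C (Fin.castLE i.isLt.le j) ω), B ω)) Z = 0) :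
    condMI μ (fun ω => (A ω, fun i => C i ω)) B Z ≤ ∑ i ∈ S, Hent μ (C i) := by
  rw [condMI_pi_left, hA, zero_add, ← Finset.sum_add_sum_compl S,
    Finset.sum_eq_zero fun i hi => hC i (Finset.mem_compl.mp hi), add_zero]
  exact Finset.sum_le_sum fun i _ => condMI_le_Hent hμ _ _ _

lemma condMI_pi_right_tail (A : Ω → α) (B : Ω → β) {n : ℕ} (X : Ω → Fin n → γ) (m : ℕ) :
    condMI μ A B (fun ω (j : {j : Fin n // m ≤ j.val}) => X ω j)
      = ∑ q ∈ Finset.univ.filter (fun q : Fin n => m ≤ q.val), condMI μ A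
          (fun ω => (B ω, fun j : {j : Fin n // q < j} => X ω j)) (fun ω => X ω q) := by
  by_cases hm : m < n
  · have hsplit : condMI μ A B (fun ω (j : {j : Fin n // m ≤ j.val}) => X ω j)
        = condMI μ A B (fun ω => ((fun j : {j : Fin n // m + 1 ≤ j.val} => X ω j),
            X ω ⟨m, hm⟩)) :=
      condMI_congr (fun _ _ => .rfl) (fun _ _ => .rfl) fun ω ω' => by
        simp only [funext_iff, Subtype.forall, Prod.mk.injEq]
        refine ⟨fun h => ⟨fun j hj => h j (by omega), h _ le_rfl⟩, fun ⟨h, hm⟩ j hj => ?_⟩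
        rcases hj.eq_or_lt with rfl | hlt
        · exact hm
        · exact h j hlt
    have hfilter : Finset.univ.filter (fun q : Fin n => m ≤ q.val)
        = insert ⟨m, hm⟩ (Finset.univ.filter fun q : Fin n => m + 1 ≤ q.val) := by
      ext q
      simp only [Finset.mem_filter, Finset.mem_univ, true_and, Finset.mem_insert, Fin.ext_iff]
      omega
    rw [hsplit, condMI_pair_right, condMI_pi_right_tail A B X (m + 1), hfilter,
      Finset.sum_insert (by simp), add_comm]
    rfl
  · have : IsEmpty {j : Fin n // m ≤ j.val} := ⟨fun j => hm (j.1.isLt.trans_le' j.2)⟩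
    rw [condMI_eq_zero_of_subsingleton,
      Finset.filter_false_of_mem fun q _ hq => hm (q.isLt.trans_le' hq), Finset.sum_empty]
termination_by n - m

lemma condMI_pi_right (A : Ω → α) (B : Ω → β) {n : ℕ} (X : Ω → Fin n → γ) :
    condMI μ A B X = ∑ q, condMI μ A
      (fun ω => (B ω, fun j : {j : Fin n // q < j} => X ω j)) (fun ω => X ω q) := by
  rw [← Finset.filter_true_of_mem (s := Finset.univ) fun q _ => Nat.zero_le q.val,
    ← condMI_pi_right_tail A B X 0]
  exact condMI_congr (fun _ _ => .rfl) (fun _ _ => .rfl) fun ω ω' => by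
    simp only [funext_iff, Subtype.forall, Nat.zero_le, forall_const]

end ChainRules

section Coordinates

variable {Ω α 𝒳₁ 𝒳₂ : Type*} [Fintype Ω] [Fintype α] [DecidableEq α]
  [Fintype 𝒳₁] [DecidableEq 𝒳₁] [Fintype 𝒳₂] [DecidableEq 𝒳₂] {μ : Ω → ℝ}

lemma condMI_eq_sum_condMI_coord (hμ : ∀ ω, 0 ≤ μ ω) (A : Ω → α) {n : ℕ}
    (X1 : Ω → Fin n → 𝒳₁) (X2 : Ω → Fin n → 𝒳₂)
    (hind : ∀ q, IndepRV μ (fun ω (j : {j // j ≠ q}) => (X1 ω j, X2 ω j))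
      (fun ω => (X1 ω q, X2 ω q))) :
    condMI μ A X2 X1 = ∑ q, condMI μ
      (fun ω => (A ω, ((fun j : {j : Fin n // q < j} => X1 ω j.1),
        (fun j : {j : Fin n // j ≠ q} => X2 ω j.1))))
      (fun ω => X2 ω q) (fun ω => X1 ω q) := by
  rw [condMI_pi_right]
  refine Finset.sum_congr rfl fun q _ => ?_
  have hW : condMI μ (fun ω => ((fun j : {j : Fin n // q < j} => X1 ω j.1),
      (fun j : {j : Fin n // j ≠ q} => X2 ω j.1))) (fun ω => X2 ω q) (fun ω => X1 ω q) = 0 :=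
    condMI_eq_zero_of_indepRV hμ (hind q)
      (fun w => ((fun j : {j : Fin n // q < j} => (w ⟨j.1, j.2.ne'⟩).1), fun j => (w j).2))
      Prod.snd Prod.fst
  rw [condMI_pair_left_eq_of_condMI_eq_zero _ _ _ _ hW]
  refine condMI_congr (fun _ _ => .rfl) (fun ω ω' => ?_) (fun _ _ => .rfl)
  simp only [Prod.mk.injEq]
  rw [← (Equiv.funSplitAt q 𝒳₂).injective.eq_iff, Equiv.funSplitAt_apply, Prod.mk.injEq]
  tauto

end Coordinates

section Mixture

variable {Ω α β γ : Type*} [Fintype Ω] [DecidableEq α] {μ : Ω → ℝ} {n : ℕ}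

lemma pushf_mix (W : Fin n × Ω → α) (a : α) :
    pushf (fun z : Fin n × Ω => μ z.2 / n) W a = ∑ q, pushf μ (fun ω => W (q, ω)) a / n := by
  simp only [pushf, Finset.sum_filter, Fintype.sum_prod_type, Finset.sum_div, ite_div,
    zero_div]

variable [Fintype α] [Fintype β] [DecidableEq β] [Fintype γ] [DecidableEq γ]

lemma Hent_mix_of_pushf_eq (hn : 0 < n) (W : Fin n × Ω → α) {ρ : α → ℝ}
    (h : ∀ q, pushf μ (fun ω => W (q, ω)) = ρ) :
    n * Hent (fun z : Fin n × Ω => μ z.2 / n) W = ∑ q, Hent μ (fun ω => W (q, ω)) := by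
  have hmix : pushf (fun z : Fin n × Ω => μ z.2 / n) W = ρ := by
    funext a
    simp only [pushf_mix, h, Finset.sum_const, Finset.card_univ, Fintype.card_fin, nsmul_eq_mul]
    field_simp
  simp only [Hent, hmix, h, Finset.sum_const, Finset.card_univ, Fintype.card_fin, nsmul_eq_mul]

lemma Hent_mix_of_determines (hμ : ∀ ω, 0 ≤ μ ω) (hn : 0 < n) (W : Fin n × Ω → α)
    (π : α → Fin n) (hπ : ∀ z, π (W z) = z.1) :
    n * Hent (fun z : Fin n × Ω => μ z.2 / n) W
      = n * Real.log n * ∑ ω, μ ω + ∑ q, Hent μ (fun ω => W (q, ω)) := by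
  have hn' : (n : ℝ) ≠ 0 := by positivity
  have hslice : ∀ q ω, pushf (fun z : Fin n × Ω => μ z.2 / n) W (W (q, ω))
      = pushf μ (fun ω => W (q, ω)) (W (q, ω)) / n := by
    intro q ω
    rw [pushf_mix, Finset.sum_eq_single q _ (by simp)]
    intro q' _ hq'
    rw [pushf, Finset.sum_eq_zero fun ω' hω' => ?_, zero_div]
    have h := hπ (q', ω')
    rw [(Finset.mem_filter.mp hω').2, hπ] at h
    exact absurd h.symm hq'
  have hterm : ∀ q ω, n * (μ ω / n * Real.log (pushf μ (fun ω => W (q, ω)) (W (q, ω)) / n))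
      = μ ω * Real.log (pushf μ (fun ω => W (q, ω)) (W (q, ω))) - μ ω * Real.log n := by
    intro q ω
    rcases (hμ ω).eq_or_lt with h0 | hpos
    · simp [← h0]
    rw [Real.log_div (hpos.trans_le (le_pushf_self hμ _ ω)).ne' hn']
    field_simp
  simp only [Hent_eq_neg_sum, Fintype.sum_prod_type, hslice, mul_neg, Finset.mul_sum, hterm,
    Finset.sum_sub_distrib, Finset.sum_const, Finset.card_univ, Fintype.card_fin, nsmul_eq_mul,
    ← Finset.sum_mul, Finset.sum_neg_distrib]
  rw [← Finset.mul_sum]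
  ring

lemma condMI_mix (hμ : ∀ ω, 0 ≤ μ ω) (hn : 0 < n)
    (A : Fin n × Ω → α) (B : Fin n × Ω → β) (C : Fin n × Ω → γ)
    (π : α → Fin n) (hπ : ∀ z, π (A z) = z.1)
    {ρB : β → ℝ} (hB : ∀ q, pushf μ (fun ω => B (q, ω)) = ρB)
    {ρBC : β × γ → ℝ} (hBC : ∀ q, pushf μ (fun ω => (B (q, ω), C (q, ω))) = ρBC) :
    n * condMI (fun z : Fin n × Ω => μ z.2 / n) A B C
      = ∑ q, condMI μ (fun ω => A (q, ω)) (fun ω => B (q, ω)) (fun ω => C (q, ω)) := by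
  have hAB := Hent_mix_of_determines hμ hn (fun z => (A z, B z)) (fun w => π w.1)
    fun z => hπ z
  have hABC := Hent_mix_of_determines hμ hn (fun z => (A z, B z, C z)) (fun w => π w.1)
    fun z => hπ z
  have hBm := Hent_mix_of_pushf_eq hn B hB
  have hBCm := Hent_mix_of_pushf_eq hn (fun z => (B z, C z)) hBC
  simp only [condMI, Finset.sum_sub_distrib, Finset.sum_add_distrib]
  linear_combination hAB + hBCm - hABC - hBm

end Mixture

section TimeSharing

variable {Ω α 𝒳₁ 𝒳₂ : Type*} [Fintype Ω] [Fintype α] [DecidableEq α]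
  [Fintype 𝒳₁] [DecidableEq 𝒳₁] [Fintype 𝒳₂] [DecidableEq 𝒳₂] {μ : Ω → ℝ} {n : ℕ}

lemma mul_condMI_timeSharing_le (hμ : IsPMF μ) (hn : 0 < n) (A : Ω → α)
    (X1 : Ω → Fin n → 𝒳₁) (X2 : Ω → Fin n → 𝒳₂) {p : 𝒳₁ × 𝒳₂ → ℝ}
    (hlaw : ∀ q, pushf μ (fun ω => (X1 ω q, X2 ω q)) = p) :
    n * condMI (fun z : Fin n × Ω => μ z.2 / n)
        (fun z => ((A z.2,
          ((fun j : Fin n => if z.1 < j then some (X1 z.2 j) else none),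
           (fun j : Fin n => if j < z.1 then some (X2 z.2 j) else none))), z.1))
        (fun z => X2 z.2 z.1) (fun z => X1 z.2 z.1)
      ≤ ∑ q, condMI μ
        (fun ω => (A ω, ((fun j : {j : Fin n // q < j} => X1 ω j.1),
          (fun j : {j : Fin n // j ≠ q} => X2 ω j.1))))
        (fun ω => X2 ω q) (fun ω => X1 ω q) := by
  rw [condMI_mix hμ.1 hn _ _ _ Prod.snd (fun _ => rfl)
    (fun q => (pushf_comp μ (fun ω => (X1 ω q, X2 ω q)) Prod.snd).trans (by rw [hlaw]))
    (fun q => (pushf_comp μ (fun ω => (X1 ω q, X2 ω q)) Prod.swap).trans (by rw [hlaw]))]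
  refine Finset.sum_le_sum fun q _ => ?_
  refine (condMI_comp_le hμ _ _ _ fun w =>
    ((w.1, ((fun j => if h : q < j then some (w.2.1 ⟨j, h⟩) else none),
      (fun j => if h : j < q then some (w.2.2 ⟨j, h.ne⟩) else none))), q)).trans_eq' ?_
  -- the `dite`s above unfold to the `ite`s of the statement
  congr 1

end TimeSharing

theorem rate_bound_R12_general {Ω 𝒜 𝒞 𝒳₁ 𝒳₂ : Type*} {n r : ℕ}
    [Fintype Ω] [Fintype 𝒜] [Fintype 𝒞] [Fintype 𝒳₁] [Fintype 𝒳₂]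
    [DecidableEq 𝒜] [DecidableEq 𝒞] [DecidableEq 𝒳₁] [DecidableEq 𝒳₂]
    (μ : Ω → ℝ) (hμ : IsPMF μ)
    (G : Ω → 𝒜) (C : Fin r → Ω → 𝒞)
    (X1 : Ω → Fin n → 𝒳₁) (X2 : Ω → Fin n → 𝒳₂)
    (p : 𝒳₁ × 𝒳₂ → ℝ) (hp : IsPMF p)
    (hiid : pushf μ (fun ω => (G ω, fun q => (X1 ω q, X2 ω q)))
      = fun z => pushf μ G z.1 * ∏ q, p (z.2 q))
    (heven : ∀ i : Fin r, Odd i.val →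
      condMI μ (C i)
        (fun ω => (G ω, (fun j : Fin i.val => C (Fin.castLE i.isLt.le j) ω), X2 ω))
        X1 = 0) :
    (∑ i ∈ Finset.univ.filter (fun i : Fin r => Even i.val), Hent μ (C i)
        ≥ condMI μ (fun ω => (G ω, fun i : Fin r => C i ω)) X2 X1) ∧
    (condMI μ (fun ω => (G ω, fun i : Fin r => C i ω)) X2 X1
        = ∑ q : Fin n,
            condMI μ
              (fun ω => ((G ω, (fun i : Fin r => C i ω)),
                ((fun j : {j : Fin n // q < j} => X1 ω j.1),
                 (fun j : {j : Fin n // j ≠ q} => X2 ω j.1))))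
              (fun ω => X2 ω q) (fun ω => X1 ω q)) ∧
    (condMI μ (fun ω => (G ω, fun i : Fin r => C i ω)) X2 X1
        ≥ n * condMI (fun z : Fin n × Ω => μ z.2 / n)
            (fun z => (((G z.2, (fun i : Fin r => C i z.2)),
              ((fun j : Fin n => if z.1 < j then some (X1 z.2 j) else none),
               (fun j : Fin n => if j < z.1 then some (X2 z.2 j) else none))), z.1))
            (fun z => X2 z.2 z.1) (fun z => X1 z.2 z.1)) := by
  let X : Ω → Fin n → 𝒳₁ × 𝒳₂ := fun ω q => (X1 ω q, X2 ω q)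
  have hlaw : pushf μ X = fun x => ∏ q, p (x q) :=
    pushf_snd_of_pushf_pair_eq_mul ((sum_pushf μ G).trans hμ.2) hiid
  have hG : IndepRV μ G X := by rw [IndepRV, hlaw]; exact hiid
  have hsplit := condMI_eq_sum_condMI_coord hμ.1 (fun ω => (G ω, fun i => C i ω)) X1 X2
    (indepRV_coord hp.2 hlaw)
  refine ⟨?_, hsplit, ?_⟩
  · have hbase : condMI μ G X2 X1 = 0 :=
      condMI_eq_zero_of_indepRV hμ.1 hG id (fun x q => (x q).2) (fun x q => (x q).1)
    exact condMI_pi_le_sum_Hent hμ G X2 X1 C _ hbase fun i hi =>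
      heven i (Nat.not_even_iff_odd.mp (by simpa using hi))
  · rcases Nat.eq_zero_or_pos n with rfl | hn
    · simpa using condMI_nonneg hμ _ _ _
    · rw [hsplit, ge_iff_le]
      exact mul_condMI_timeSharing_le hμ hn (fun ω => (G ω, fun i => C i ω)) X1 X2
        (pushf_coord hp.2 hlaw)

/-- with `G` common randomness independent of the i.i.d. sources
`(X_1^n, X_2^n)`, and the interactive Markov structure, the chain of (in)equalities
`∑_{i odd} H(C_i) ≥ I(G C_{[1:r]}; X_1^n | X_2^n)
  = ∑_q I(G C_{[1:r]} X_1^{q+1:n} X_{2,∼q}; X_{1,q} | X_{2,q})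
  ≥ n·I(F_{[1:r]}; X_1 | X_2)` holds, where (on the extended space `Fin n × Ω` with
`Q = ` first coordinate uniform and independent) `F_{[1:r]}` is jointly
`(G, C_{[1:r]}, X_1^{Q+1:n}, X_2^{1:Q-1}, Q)` (sequences encoded with `Option`-padding),
`X_1 := X_{1,Q}`, `X_2 := X_{2,Q}`. Paper-odd rounds are 0-indexed `Even i.val`. -/
theorem rate_bound_R12 {Ω 𝒜 𝒞 𝒳₁ 𝒳₂ : Type*} {n r : ℕ}
    [Fintype Ω] [Fintype 𝒜] [Fintype 𝒞] [Fintype 𝒳₁] [Fintype 𝒳₂]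
    [DecidableEq 𝒜] [DecidableEq 𝒞] [DecidableEq 𝒳₁] [DecidableEq 𝒳₂]
    (hn : 0 < n)
    (μ : Ω → ℝ) (hμ : IsPMF μ)
    (G : Ω → 𝒜) (C : Fin r → Ω → 𝒞)
    (X1 : Ω → Fin n → 𝒳₁) (X2 : Ω → Fin n → 𝒳₂)
    (p : 𝒳₁ × 𝒳₂ → ℝ) (hp : IsPMF p)
    (hiid : pushf μ (fun ω => (G ω, fun q => (X1 ω q, X2 ω q)))
      = fun z => pushf μ G z.1 * ∏ q, p (z.2 q))
    (hodd : ∀ i : Fin r, Even i.val →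
      condMI μ (C i)
        (fun ω => (G ω, (fun j : Fin i.val => C (Fin.castLE i.isLt.le j) ω), X1 ω))
        X2 = 0)
    (heven : ∀ i : Fin r, Odd i.val →
      condMI μ (C i)
        (fun ω => (G ω, (fun j : Fin i.val => C (Fin.castLE i.isLt.le j) ω), X2 ω))
        X1 = 0) :
    (∑ i ∈ Finset.univ.filter (fun i : Fin r => Even i.val), Hent μ (C i)
        ≥ condMI μ (fun ω => (G ω, fun i : Fin r => C i ω)) X2 X1) ∧
    (condMI μ (fun ω => (G ω, fun i : Fin r => C i ω)) X2 X1
        = ∑ q : Fin n,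
            condMI μ
              (fun ω => ((G ω, (fun i : Fin r => C i ω)),
                ((fun j : {j : Fin n // q < j} => X1 ω j.1),
                 (fun j : {j : Fin n // j ≠ q} => X2 ω j.1))))
              (fun ω => X2 ω q) (fun ω => X1 ω q)) ∧
    (condMI μ (fun ω => (G ω, fun i : Fin r => C i ω)) X2 X1
        ≥ n * condMI (fun z : Fin n × Ω => μ z.2 / n)
            (fun z => (((G z.2, (fun i : Fin r => C i z.2)),
              ((fun j : Fin n => if z.1 < j then some (X1 z.2 j) else none),
               (fun j : Fin n => if j < z.1 then some (X2 z.2 j) else none))), z.1))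
            (fun z => X2 z.2 z.1) (fun z => X1 z.2 z.1)) :=
  rate_bound_R12_general μ hμ G C X1 X2 p hp hiid heven
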